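/- Let A = Diag(A₁, A₂) ∈ ℝ^{(n₁+n₂)×(n₁+n₂)} be block diagonal and let u₁ ∈ ℝ^{n₁}, u₂ ∈ ℝ^{n₂} be nonzero, and set 𝐮₁=(u₁,0), 𝐮₂=(0,u₂). Suppose Re z_A(𝐮₁) = Re z_A(𝐮₂). Then for every nonzero w ∈ span(𝐮₁,𝐮₂), Im z_A(w) lies between Im z_A(𝐮₁) and Im z_A(𝐮₂), and Re z_A(w) = Re z_A(𝐮₁); i.e., z_A(span(𝐮₁,𝐮₂)\{0}) ⊆ [z_A(𝐮₁), z_A(𝐮₂)], the vertical segment joining the two points. -/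

import Mathlib

open Matrix
open scoped RealInnerProductSpace

noncomputable def mulVecE {ι : Type*} [Fintype ι] (A : Matrix ι ι ℝ)
    (x : EuclideanSpace ℝ ι) : EuclideanSpace ℝ ι := WithLp.toLp 2 (A.mulVec x)

open Classical in
noncomputable def ang {ι : Type*} [Fintype ι] (a b : EuclideanSpace ℝ ι) : ℝ :=
  if a = 0 ∨ b = 0 then 0 else Real.arccos (⟪a, b⟫ / (‖a‖ * ‖b‖))

noncomputable def zA {ι : Type*} [Fintype ι] (A : Matrix ι ι ℝ)
    (x : EuclideanSpace ℝ ι) : ℂ :=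
  ((‖mulVecE A x‖ / ‖x‖ : ℝ) : ℂ) * Complex.exp (Complex.I * (ang (mulVecE A x) x : ℝ))

noncomputable def SRG {ι : Type*} [Fintype ι] (A : Matrix ι ι ℝ) : Set ℂ :=
  {z | ∃ x : EuclideanSpace ℝ ι, x ≠ 0 ∧ (z = zA A x ∨ z = (starRingEnd ℂ) (zA A x))}

/-!
Since `𝐮₁`, `𝐮₂`, `A𝐮₁`, `A𝐮₂` satisfy the orthogonality relations, for `w = a𝐮₁ + b𝐮₂` each of
`‖w‖²`, `⟪Aw, w⟫` and `‖Aw‖²` splits as `a²·(value at 𝐮₁) + b²·(value at 𝐮₂)`. Hence `Re z_A(w)` and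
`|z_A(w)|²` are convex combinations, with weights proportional to `a²‖𝐮₁‖²` and `b²‖𝐮₂‖²`, of their
values at `𝐮₁` and `𝐮₂`. When the two real parts agree, `Re z_A(w)` equals them, and since
`Im z_A ≥ 0` we have `Im z_A = √(|z_A|² - (Re z_A)²)`, a monotone function of `|z_A|²`.
-/

section zA

variable {ι : Type*} [Fintype ι] (A : Matrix ι ι ℝ) (x : EuclideanSpace ℝ ι)

lemma mulVecE_smul_add_smul (a b : ℝ) (y : EuclideanSpace ℝ ι) :
    mulVecE A (a • x + b • y) = a • mulVecE A x + b • mulVecE A y := by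
  ext i
  simp [mulVecE, Matrix.mulVec_add, Matrix.mulVec_smul]

lemma norm_zA : ‖zA A x‖ = ‖mulVecE A x‖ / ‖x‖ := by
  rw [zA, mul_comm Complex.I, norm_mul, Complex.norm_exp_ofReal_mul_I, mul_one,
    Complex.norm_real, Real.norm_of_nonneg (by positivity)]

lemma ang_mem_Icc (a b : EuclideanSpace ℝ ι) : ang a b ∈ Set.Icc 0 Real.pi := by
  unfold ang
  split_ifs
  exacts [⟨le_rfl, Real.pi_pos.le⟩, ⟨Real.arccos_nonneg _, Real.arccos_le_pi _⟩]

lemma zA_im_nonneg : 0 ≤ (zA A x).im := by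
  rw [zA, mul_comm Complex.I, Complex.im_ofReal_mul, Complex.exp_ofReal_mul_I_im]
  obtain ⟨h0, hπ⟩ := ang_mem_Icc (mulVecE A x) x
  exact mul_nonneg (by positivity) (Real.sin_nonneg_of_nonneg_of_le_pi h0 hπ)

lemma zA_re : (zA A x).re = ⟪mulVecE A x, x⟫ / ‖x‖ ^ 2 := by
  rw [zA, mul_comm Complex.I, Complex.re_ofReal_mul, Complex.exp_ofReal_mul_I_re, ang]
  split_ifs with h
  · rcases h with h | h <;> simp [h]
  · push Not at h
    have hAx : ‖mulVecE A x‖ ≠ 0 := norm_ne_zero_iff.mpr h.1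
    rw [Real.cos_arccos (neg_le_of_abs_le (abs_real_inner_div_norm_mul_norm_le_one _ _))
      (le_of_abs_le (abs_real_inner_div_norm_mul_norm_le_one _ _))]
    field_simp

lemma norm_sq_mul_zA_re : ‖x‖ ^ 2 * (zA A x).re = ⟪mulVecE A x, x⟫ := by
  rcases eq_or_ne x 0 with rfl | hx
  · simp
  · rw [zA_re, mul_div_cancel₀ _ (by positivity)]

lemma norm_sq_mul_norm_zA_sq : ‖x‖ ^ 2 * ‖zA A x‖ ^ 2 = ‖mulVecE A x‖ ^ 2 := by
  rcases eq_or_ne x 0 with rfl | hx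
  · simp [mulVecE]
  · rw [norm_zA, div_pow, mul_div_cancel₀ _ (by positivity)]

end zA

lemma Complex.im_eq_sqrt_of_im_nonneg {z : ℂ} (hz : 0 ≤ z.im) : z.im = √(‖z‖ ^ 2 - z.re ^ 2) := by
  rw [Complex.sq_norm, Complex.normSq_apply, ← sq, ← sq, add_sub_cancel_left, Real.sqrt_sq hz]

lemma inner_smul_add_smul_of_inner_eq_zero {E : Type*} [NormedAddCommGroup E]
    [InnerProductSpace ℝ E] {p q x y : E} (hpy : ⟪p, y⟫ = 0) (hqx : ⟪q, x⟫ = 0) (a b : ℝ) :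
    ⟪a • p + b • q, a • x + b • y⟫ = a ^ 2 * ⟪p, x⟫ + b ^ 2 * ⟪q, y⟫ := by
  simp only [inner_add_left, inner_add_right, real_inner_smul_left, real_inner_smul_right, hpy,
    hqx]
  ring

lemma div_mem_segment_of_sq_mul {a b Nx Ny fx fy : ℝ} (hNx : 0 ≤ Nx) (hNy : 0 ≤ Ny)
    (hpos : 0 < a ^ 2 * Nx + b ^ 2 * Ny) :
    (a ^ 2 * (Nx * fx) + b ^ 2 * (Ny * fy)) / (a ^ 2 * Nx + b ^ 2 * Ny) ∈ segment ℝ fx fy := by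
  refine mem_segment_iff_div.mpr ⟨a ^ 2 * Nx, b ^ 2 * Ny, by positivity, by positivity, hpos, ?_⟩
  rw [smul_eq_mul, smul_eq_mul, div_mul_eq_mul_div, div_mul_eq_mul_div, ← add_div]
  ring

section OrthogonalPair

variable {ι : Type*} [Fintype ι] (A : Matrix ι ι ℝ) {x y : EuclideanSpace ℝ ι}

lemma norm_smul_add_smul_sq (hxy : ⟪x, y⟫ = 0) (a b : ℝ) :
    ‖a • x + b • y‖ ^ 2 = a ^ 2 * ‖x‖ ^ 2 + b ^ 2 * ‖y‖ ^ 2 := by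
  simp only [← real_inner_self_eq_norm_sq]
  exact inner_smul_add_smul_of_inner_eq_zero hxy (real_inner_comm x y ▸ hxy) a b

lemma zA_re_smul_add_smul_mem_segment (hxy : ⟪x, y⟫ = 0) (hAxy : ⟪mulVecE A x, y⟫ = 0)
    (hxAy : ⟪x, mulVecE A y⟫ = 0) {a b : ℝ} (hw : a • x + b • y ≠ 0) :
    (zA A (a • x + b • y)).re ∈ segment ℝ (zA A x).re (zA A y).re := by
  have hpos : 0 < a ^ 2 * ‖x‖ ^ 2 + b ^ 2 * ‖y‖ ^ 2 := by
    rw [← norm_smul_add_smul_sq hxy]; positivity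
  rw [zA_re A (a • x + b • y), mulVecE_smul_add_smul, norm_smul_add_smul_sq hxy,
    inner_smul_add_smul_of_inner_eq_zero hAxy ((real_inner_comm x _).trans hxAy),
    ← norm_sq_mul_zA_re, ← norm_sq_mul_zA_re]
  exact div_mem_segment_of_sq_mul (by positivity) (by positivity) hpos

lemma norm_zA_smul_add_smul_sq_mem_segment (hxy : ⟪x, y⟫ = 0)
    (hAxAy : ⟪mulVecE A x, mulVecE A y⟫ = 0) {a b : ℝ} (hw : a • x + b • y ≠ 0) :
    ‖zA A (a • x + b • y)‖ ^ 2 ∈ segment ℝ (‖zA A x‖ ^ 2) (‖zA A y‖ ^ 2) := by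
  have hpos : 0 < a ^ 2 * ‖x‖ ^ 2 + b ^ 2 * ‖y‖ ^ 2 := by
    rw [← norm_smul_add_smul_sq hxy]; positivity
  rw [norm_zA A (a • x + b • y), div_pow, mulVecE_smul_add_smul, norm_smul_add_smul_sq hxy,
    norm_smul_add_smul_sq hAxAy, ← norm_sq_mul_norm_zA_sq, ← norm_sq_mul_norm_zA_sq]
  exact div_mem_segment_of_sq_mul (by positivity) (by positivity) hpos

theorem zA_mem_vertical_segment_of_orthogonal (hxy : ⟪x, y⟫ = 0)
    (hAxy : ⟪mulVecE A x, y⟫ = 0) (hxAy : ⟪x, mulVecE A y⟫ = 0)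
    (hAxAy : ⟪mulVecE A x, mulVecE A y⟫ = 0) (hre : (zA A x).re = (zA A y).re)
    {w : EuclideanSpace ℝ ι} (hw : w ∈ Submodule.span ℝ {x, y}) (hw0 : w ≠ 0) :
    (zA A w).re = (zA A x).re ∧ (zA A w).im ∈ Set.uIcc (zA A x).im (zA A y).im := by
  obtain ⟨a, b, rfl⟩ := Submodule.mem_span_pair.mp hw
  have hre_w : (zA A (a • x + b • y)).re = (zA A x).re := by
    simpa [← hre] using zA_re_smul_add_smul_mem_segment A hxy hAxy hxAy hw0
  refine ⟨hre_w, ?_⟩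
  simp only [Complex.im_eq_sqrt_of_im_nonneg (zA_im_nonneg A _), hre_w, ← hre]
  refine Monotone.mapsTo_uIcc (f := fun t : ℝ ↦ √(t - (zA A x).re ^ 2))
    (fun s t hst ↦ Real.sqrt_le_sqrt (by linarith)) ?_
  exact segment_subset_uIcc _ _ (norm_zA_smul_add_smul_sq_mem_segment A hxy hAxAy hw0)

end OrthogonalPair

section Blocks

variable {m n : Type*} [Fintype m] [Fintype n]

lemma inner_toLp_elim_zero_toLp_zero_elim (p : m → ℝ) (q : n → ℝ) :
    ⟪(WithLp.toLp 2 (Sum.elim p 0) : EuclideanSpace ℝ (m ⊕ n)), WithLp.toLp 2 (Sum.elim 0 q)⟫ =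
      0 := by
  simp [PiLp.inner_apply, Fintype.sum_sum_type]

variable (A₁ : Matrix m m ℝ) (A₂ : Matrix n n ℝ)

lemma mulVecE_fromBlocks_toLp_elim_zero (p : m → ℝ) :
    mulVecE (fromBlocks A₁ 0 0 A₂) (WithLp.toLp 2 (Sum.elim p 0)) =
      WithLp.toLp 2 (Sum.elim (A₁ *ᵥ p) 0) := by
  simp [mulVecE, fromBlocks_mulVec]

lemma mulVecE_fromBlocks_toLp_zero_elim (q : n → ℝ) :
    mulVecE (fromBlocks A₁ 0 0 A₂) (WithLp.toLp 2 (Sum.elim 0 q)) =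
      WithLp.toLp 2 (Sum.elim (0 : m → ℝ) (A₂ *ᵥ q)) := by
  simp [mulVecE, fromBlocks_mulVec]

end Blocks

theorem stmt19_general {n₁ n₂ : ℕ} (A₁ : Matrix (Fin n₁) (Fin n₁) ℝ) (A₂ : Matrix (Fin n₂) (Fin n₂) ℝ)
    (u₁ : EuclideanSpace ℝ (Fin n₁)) (u₂ : EuclideanSpace ℝ (Fin n₂)) :
    let A : Matrix (Fin n₁ ⊕ Fin n₂) (Fin n₁ ⊕ Fin n₂) ℝ := Matrix.fromBlocks A₁ 0 0 A₂
    let U₁ : EuclideanSpace ℝ (Fin n₁ ⊕ Fin n₂) := WithLp.toLp 2 (Sum.elim u₁ 0)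
    let U₂ : EuclideanSpace ℝ (Fin n₁ ⊕ Fin n₂) := WithLp.toLp 2 (Sum.elim 0 u₂)
    (zA A U₁).re = (zA A U₂).re →
    ∀ w : EuclideanSpace ℝ (Fin n₁ ⊕ Fin n₂),
      w ∈ Submodule.span ℝ ({U₁, U₂} : Set (EuclideanSpace ℝ (Fin n₁ ⊕ Fin n₂))) →
      w ≠ 0 →
      (zA A w).re = (zA A U₁).re ∧
      (zA A w).im ∈ Set.uIcc (zA A U₁).im (zA A U₂).im := by
  intro A U₁ U₂ hre w hw hw0
  have hAU₁ := mulVecE_fromBlocks_toLp_elim_zero A₁ A₂ u₁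
  have hAU₂ := mulVecE_fromBlocks_toLp_zero_elim A₁ A₂ u₂
  have horth := inner_toLp_elim_zero_toLp_zero_elim (m := Fin n₁) (n := Fin n₂)
  exact zA_mem_vertical_segment_of_orthogonal A (horth _ _) (hAU₁ ▸ horth _ _)
    (hAU₂ ▸ horth _ _) (hAU₁ ▸ hAU₂ ▸ horth _ _) hre hw hw0

theorem stmt19 {n₁ n₂ : ℕ} (A₁ : Matrix (Fin n₁) (Fin n₁) ℝ) (A₂ : Matrix (Fin n₂) (Fin n₂) ℝ)
    (u₁ : EuclideanSpace ℝ (Fin n₁)) (u₂ : EuclideanSpace ℝ (Fin n₂))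
    (h₁ : u₁ ≠ 0) (h₂ : u₂ ≠ 0) :
    let A : Matrix (Fin n₁ ⊕ Fin n₂) (Fin n₁ ⊕ Fin n₂) ℝ := Matrix.fromBlocks A₁ 0 0 A₂
    let U₁ : EuclideanSpace ℝ (Fin n₁ ⊕ Fin n₂) := WithLp.toLp 2 (Sum.elim u₁ 0)
    let U₂ : EuclideanSpace ℝ (Fin n₁ ⊕ Fin n₂) := WithLp.toLp 2 (Sum.elim 0 u₂)
    (zA A U₁).re = (zA A U₂).re →
    ∀ w : EuclideanSpace ℝ (Fin n₁ ⊕ Fin n₂),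
      w ∈ Submodule.span ℝ ({U₁, U₂} : Set (EuclideanSpace ℝ (Fin n₁ ⊕ Fin n₂))) →
      w ≠ 0 →
      (zA A w).re = (zA A U₁).re ∧
      (zA A w).im ∈ Set.uIcc (zA A U₁).im (zA A U₂).im :=
  stmt19_general A₁ A₂ u₁ u₂
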